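/- Let α ∈ (0,1) be an even-over-odd rational and c > 0, and set c_α = c^{1-α}/(α-1) < 0. The Bregman-Tweedie loss L(x) = ln_{α,c}(c + exp_{α,c}(x)) with exp_{α,c}(x) = ((1-α)(x - c_α))^{1/(1-α)} (odd-root real power) is differentiable at every x ≠ 2c_α, with derivative L'(x) = (exp_{α,c}(x)/(c + exp_{α,c}(x)))^α; moreover c + exp_{α,c}(x) = 0 holds exactly at x = 2c_α. -/

import Mathlib

/-- Real power with an odd-denominator rational exponent, defined on all of ℝ
via odd roots: t^r = sign(t)·|t|^r. -/
noncomputable def oddRpow (t r : ℝ) : ℝ := Real.sign t * |t| ^ r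

/-- exp_{α,c}(x) = ((1-α)(x - c_α))^{1/(1-α)} (odd-root real power). -/
noncomputable def extExpC (α cα x : ℝ) : ℝ := oddRpow ((1 - α) * (x - cα)) (1 / (1 - α))

/-- ln_{α,c}(y) = (y^{1-α} - c^{1-α})/(1-α) (odd-root real power). -/
noncomputable def extLnC (α c y : ℝ) : ℝ := (oddRpow y (1 - α) - c ^ (1 - α)) / (1 - α)

/-- Bregman-Tweedie loss L(x) = ln_{α,c}(c + exp_{α,c}(x)). -/
noncomputable def btLoss (α c cα x : ℝ) : ℝ := extLnC α c (c + extExpC α cα x)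

/-!
The odd power `t ↦ t^p` is strictly increasing for `p > 0`, and for `p > 1` it is differentiable
everywhere with derivative `p |t|^(p-1)`, also at `t = 0`, where it is `o(t)`. Hence
`exp_{α,c}` (an odd power of an increasing affine map, `p = 1/(1-α) > 1`) is strictly increasing,
so it takes the value `-c` only at `2 c_α`, and its derivative is `|exp_{α,c}|^α`. Away from `0`,
`ln_{α,c}` has derivative `|y|^(-α)`, and the chain rule gives `L'`.
-/

open Filter Topology Asymptotics

section OddRpow

variable {t p : ℝ}

lemma oddRpow_neg (t p : ℝ) : oddRpow (-t) p = -oddRpow t p := by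
  simp [oddRpow, Real.sign_neg]

lemma oddRpow_of_nonneg (ht : 0 ≤ t) (hp : p ≠ 0) : oddRpow t p = t ^ p := by
  rcases ht.eq_or_lt with rfl | ht
  · simp [oddRpow, Real.zero_rpow hp]
  · simp [oddRpow, Real.sign_of_pos ht, abs_of_pos ht]

lemma abs_oddRpow (t : ℝ) (hp : p ≠ 0) : |oddRpow t p| = |t| ^ p := by
  rcases le_total 0 t with ht | ht
  · rw [oddRpow_of_nonneg ht hp, abs_of_nonneg ht, abs_of_nonneg (Real.rpow_nonneg ht p)]
  · rw [← neg_neg t, oddRpow_neg, abs_neg, abs_neg, oddRpow_of_nonneg (neg_nonneg.2 ht) hp,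
      abs_of_nonneg (neg_nonneg.2 ht), abs_of_nonneg (Real.rpow_nonneg (neg_nonneg.2 ht) p)]

lemma oddRpow_eq_mul_abs_rpow (t p : ℝ) : oddRpow t p = t * |t| ^ (p - 1) := by
  rcases lt_trichotomy t 0 with ht | rfl | ht
  · rw [oddRpow, Real.rpow_sub (abs_pos.2 ht.ne), Real.rpow_one, Real.sign_of_neg ht,
      abs_of_neg ht, mul_div_left_comm, div_neg_self ht.ne, mul_comm]
  · simp [oddRpow]
  · rw [oddRpow, Real.rpow_sub (abs_pos.2 ht.ne'), Real.rpow_one, Real.sign_of_pos ht,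
      abs_of_pos ht, mul_div_left_comm, div_self ht.ne', mul_one, one_mul]

lemma oddRpow_strictMono (hp : 0 < p) : StrictMono (oddRpow · p) :=
  strictMono_of_odd_strictMonoOn_nonneg (fun t => oddRpow_neg t p) <|
    (Real.strictMonoOn_rpow_Ici_of_exponent_pos hp).congr fun _ ht =>
      (oddRpow_of_nonneg ht hp.ne').symm

lemma hasDerivAt_oddRpow_of_ne_zero (p : ℝ) (ht : t ≠ 0) :
    HasDerivAt (oddRpow · p) (p * |t| ^ (p - 1)) t := by
  have hderiv := ((hasDerivAt_abs ht).rpow_const (p := p) (.inl (abs_ne_zero.2 ht))).const_mul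
    (Real.sign t)
  rcases ht.lt_or_gt with h | h
  · refine (hderiv.congr_of_eventuallyEq ?_).congr_deriv (by simp [Real.sign_of_neg h, h])
    filter_upwards [Iio_mem_nhds h] with s hs
    simp [oddRpow, Real.sign_of_neg h, Real.sign_of_neg (show s < 0 from hs)]
  · refine (hderiv.congr_of_eventuallyEq ?_).congr_deriv (by simp [Real.sign_of_pos h, h])
    filter_upwards [Ioi_mem_nhds h] with s hs
    simp [oddRpow, Real.sign_of_pos h, Real.sign_of_pos (show 0 < s from hs)]

lemma hasDerivAt_oddRpow_zero (hp : 1 < p) : HasDerivAt (oddRpow · p) 0 0 := by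
  rw [hasDerivAt_iff_isLittleO_nhds_zero]
  have hsmall : Tendsto (fun h : ℝ => |h| ^ (p - 1)) (𝓝 0) (𝓝 0) := by
    convert continuous_abs.continuousAt.rpow_const (.inr (sub_pos.2 hp).le) |>.tendsto
    simp [Real.zero_rpow (sub_pos.2 hp).ne']
  calc (fun h => oddRpow (0 + h) p - oddRpow 0 p - h • (0 : ℝ))
      = fun h => h * |h| ^ (p - 1) := by ext h; simp [oddRpow_eq_mul_abs_rpow]
    _ =o[𝓝 0] fun h => h * 1 :=
      (isBigO_refl _ _).mul_isLittleO ((isLittleO_const_iff one_ne_zero).2 hsmall)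
    _ = fun h => h := by simp

lemma hasDerivAt_oddRpow (hp : 1 < p) (t : ℝ) :
    HasDerivAt (oddRpow · p) (p * |t| ^ (p - 1)) t := by
  rcases eq_or_ne t 0 with rfl | ht
  · simpa [Real.zero_rpow (sub_pos.2 hp).ne'] using hasDerivAt_oddRpow_zero hp
  · exact hasDerivAt_oddRpow_of_ne_zero p ht

end OddRpow

section ExtExpC

variable {α : ℝ}

lemma extExpC_strictMono (h1 : α < 1) (cα : ℝ) : StrictMono (extExpC α cα) :=
  (oddRpow_strictMono (one_div_pos.2 (sub_pos.2 h1))).comp fun _ _ hxy =>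
    mul_lt_mul_of_pos_left (sub_lt_sub_right hxy cα) (sub_pos.2 h1)

lemma extExpC_two_mul (hα : α ≠ 1) {c : ℝ} (hc : 0 ≤ c) :
    extExpC α (c ^ (1 - α) / (α - 1)) (2 * (c ^ (1 - α) / (α - 1))) = -c := by
  have hβ : 1 - α ≠ 0 := sub_ne_zero.2 hα.symm
  have harg :
      (1 - α) * (2 * (c ^ (1 - α) / (α - 1)) - c ^ (1 - α) / (α - 1)) = -c ^ (1 - α) := by
    field_simp [sub_ne_zero.2 hα]
    ring
  rw [extExpC, harg, oddRpow_neg, oddRpow_of_nonneg (Real.rpow_nonneg hc _) (one_div_ne_zero hβ),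
    one_div, Real.rpow_rpow_inv hc hβ]

lemma hasDerivAt_extExpC (h0 : 0 < α) (h1 : α < 1) (cα x : ℝ) :
    HasDerivAt (extExpC α cα) (|extExpC α cα x| ^ α) x := by
  have hβ : 0 < 1 - α := sub_pos.2 h1
  have hp : 1 < 1 / (1 - α) := by rw [lt_div_iff₀ hβ]; linarith
  have haffine : HasDerivAt (fun x => (1 - α) * (x - cα)) (1 - α) x := by
    simpa using ((hasDerivAt_id x).sub_const cα).const_mul (1 - α)
  refine ((hasDerivAt_oddRpow hp _).comp x haffine).congr_deriv ?_
  have hexp : 1 / (1 - α) - 1 = 1 / (1 - α) * α := by field_simp; ring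
  rw [extExpC, abs_oddRpow _ (zero_lt_one.trans hp).ne', ← Real.rpow_mul (abs_nonneg _), ← hexp]
  field_simp

lemma hasDerivAt_extLnC (hα : α ≠ 1) (c : ℝ) {y : ℝ} (hy : y ≠ 0) :
    HasDerivAt (extLnC α c) (|y| ^ (-α)) y := by
  refine (((hasDerivAt_oddRpow_of_ne_zero (1 - α) hy).sub_const (c ^ (1 - α))).div_const
    (1 - α)).congr_deriv ?_
  rw [mul_div_cancel_left₀ _ (sub_ne_zero.2 hα.symm), sub_sub_cancel_left]

lemma hasDerivAt_btLoss (h0 : 0 < α) (h1 : α < 1) {c cα x : ℝ}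
    (hx : c + extExpC α cα x ≠ 0) :
    HasDerivAt (btLoss α c cα) (|extExpC α cα x / (c + extExpC α cα x)| ^ α) x := by
  refine ((hasDerivAt_extLnC h1.ne c hx).comp x
    ((hasDerivAt_extExpC h0 h1 cα x).const_add c)).congr_deriv ?_
  rw [abs_div, Real.div_rpow (abs_nonneg _) (abs_nonneg _), Real.rpow_neg (abs_nonneg _),
    inv_mul_eq_div]

end ExtExpC

theorem stmt17_general (α c : ℝ) (h0 : 0 < α) (h1 : α < 1)
    (hc : 0 < c) :
    let cα : ℝ := c ^ (1 - α) / (α - 1)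
    (∀ x : ℝ, c + extExpC α cα x = 0 ↔ x = 2 * cα) ∧
    (∀ x : ℝ, x ≠ 2 * cα → HasDerivAt (btLoss α c cα)
      (|extExpC α cα x / (c + extExpC α cα x)| ^ α) x) := by
  intro cα
  have hval : extExpC α cα (2 * cα) = -c := extExpC_two_mul h1.ne hc.le
  have hzero (x : ℝ) : c + extExpC α cα x = 0 ↔ x = 2 * cα := by
    rw [add_eq_zero_iff_eq_neg', ← hval, (extExpC_strictMono h1 cα).injective.eq_iff]
  exact ⟨hzero, fun x hx => hasDerivAt_btLoss h0 h1 (mt (hzero x).1 hx)⟩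

/-- For α ∈ (0,1) an even-over-odd rational and c > 0 with c_α = c^{1-α}/(α-1),
we have c + exp_{α,c}(x) = 0 exactly at x = 2c_α, and the Bregman-Tweedie loss
is differentiable at every x ≠ 2c_α with derivative
L'(x) = (exp_{α,c}(x)/(c + exp_{α,c}(x)))^α (even-type real power |·|^α). -/
theorem stmt17 (k l : ℕ) (α c : ℝ)
    (hα : α = (2 * k : ℝ) / (2 * l + 1 : ℝ)) (h0 : 0 < α) (h1 : α < 1)
    (hc : 0 < c) :
    let cα : ℝ := c ^ (1 - α) / (α - 1)
    (∀ x : ℝ, c + extExpC α cα x = 0 ↔ x = 2 * cα) ∧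
    (∀ x : ℝ, x ≠ 2 * cα → HasDerivAt (btLoss α c cα)
      (|extExpC α cα x / (c + extExpC α cα x)| ^ α) x) :=
  stmt17_general α c h0 h1 hc
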